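/- With the notation of the previous statement, suppose a > 0, b1 > 0 and a·b1 + b2 < 0, and t ≥ 2. Then the function g_t is not convex on ℝ^{I×t}. -/

import Mathlib

/-!
Moving only the charging power of one EV at time `t - 1` changes `g_t` along a line, and along
that line `g_t` is a constant plus `(a·b1 + b2)·(ℓ_{t-1} + s)²`, a strictly concave parabola
when `a·b1 + b2 < 0`.
-/

open Finset

lemma not_convexOn_univ_const_add_mul_sq {A κ L : ℝ} (hκ : κ < 0) :
    ¬ ConvexOn ℝ Set.univ (fun s : ℝ => A + κ * (L + s) ^ 2) := by
  intro h
  have hmid := h.2 (Set.mem_univ (1 - L)) (Set.mem_univ (-1 - L))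
    (by norm_num : (0 : ℝ) ≤ 1 / 2) (by norm_num : (0 : ℝ) ≤ 1 / 2) (by norm_num)
  simp only [smul_eq_mul] at hmid
  nlinarith

lemma sum_Icc_sq_add_single (w ℓ : ℕ → ℝ) {t : ℕ} (ht : 2 ≤ t) (s : ℝ) :
    ∑ t' ∈ Icc 1 (t - 1), w t' * (ℓ (t - t') + (Pi.single (t - 1) s : ℕ → ℝ) (t - t')) ^ 2
      = w 1 * (ℓ (t - 1) + s) ^ 2 + ∑ t' ∈ (Icc 1 (t - 1)).erase 1, w t' * ℓ (t - t') ^ 2 := by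
  rw [← add_sum_erase _ _ (by simp; omega : 1 ∈ Icc 1 (t - 1)), Pi.single_eq_same]
  congr 1
  refine sum_congr rfl fun t' ht' => ?_
  simp only [mem_erase, mem_Icc] at ht'
  rw [Pi.single_eq_of_ne (by omega), add_zero]

theorem stmt_2_general (I : ℕ) (hI : 1 ≤ I) (a b1 b2 : ℝ) (hnconv : a * b1 + b2 < 0) (t : ℕ) (ht : 2 ≤ t)
    (x0 u0 : ℝ) (c ℓ : ℕ → ℝ) :
    ¬ ConvexOn ℝ Set.univ (fun v : Fin I → ℕ → ℝ =>
      a ^ t * x0 + b1 * (ℓ t + ∑ i, v i t) ^ 2 + b2 * a ^ (t - 1) * u0 ^ 2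
        + (a * b1 + b2) * ∑ t' ∈ Finset.Icc 1 (t - 1),
            a ^ (t' - 1) * (ℓ (t - t') + ∑ i, v i (t - t')) ^ 2
        + ∑ t' ∈ Finset.Icc 1 t, a ^ (t - t') * c t') := by
  intro hconv
  set line := LinearMap.toSpanSingleton ℝ (Fin I → ℕ → ℝ)
    (Pi.single ⟨0, hI⟩ (Pi.single (t - 1) 1))
  have hcol (s : ℝ) (n : ℕ) : ∑ i, line s i n = (Pi.single (t - 1) s : ℕ → ℝ) n := by
    simp [line, Pi.single_apply, ite_apply, mul_ite]
  refine not_convexOn_univ_const_add_mul_sq (L := ℓ (t - 1)) (A := a ^ t * x0 + b1 * ℓ t ^ 2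
      + b2 * a ^ (t - 1) * u0 ^ 2
      + (a * b1 + b2) * ∑ t' ∈ (Icc 1 (t - 1)).erase 1, a ^ (t' - 1) * ℓ (t - t') ^ 2
      + ∑ t' ∈ Icc 1 t, a ^ (t - t') * c t') hnconv ?_
  refine (hconv.comp_linearMap line).congr fun s _ => ?_
  simp only [Function.comp_apply, hcol, sum_Icc_sq_add_single (fun t' => a ^ (t' - 1)) ℓ ht,
    Pi.single_eq_of_ne (show t ≠ t - 1 by omega)]
  ring

/-- If `a > 0`, `b1 > 0` and `a·b1 + b2 < 0`, then (for `t ≥ 2`, `I ≥ 1`) the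
closed-form hot-spot temperature `g_t` is not convex. -/
theorem stmt_2 (I : ℕ) (hI : 1 ≤ I) (a b1 b2 : ℝ) (ha : 0 < a) (ha' : a ≤ 1) (hb1 : 0 < b1)
    (hb2 : b2 ≤ 0) (hnconv : a * b1 + b2 < 0) (t : ℕ) (ht : 2 ≤ t) (x0 u0 : ℝ) (c ℓ : ℕ → ℝ) :
    ¬ ConvexOn ℝ Set.univ (fun v : Fin I → ℕ → ℝ =>
      a ^ t * x0 + b1 * (ℓ t + ∑ i, v i t) ^ 2 + b2 * a ^ (t - 1) * u0 ^ 2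
        + (a * b1 + b2) * ∑ t' ∈ Finset.Icc 1 (t - 1),
            a ^ (t' - 1) * (ℓ (t - t') + ∑ i, v i (t - t')) ^ 2
        + ∑ t' ∈ Finset.Icc 1 t, a ^ (t - t') * c t') :=
  stmt_2_general I hI a b1 b2 hnconv t ht x0 u0 c ℓ
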